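/- arXiv:2411.11763 — 5 statements merged into one kernel-verified Lean document; each statement's English description precedes it below -/
import Mathlib

section
/- Let Q be a quandle and x ∈ Q, and let Q_x denote the orbit of x (the smallest subset of Q containing x closed under all maps β_y and β_y^{-1}, where β_y(z) = z ▷ y). Define a new operation on Q by z ▷' y = β_y^{-1}(z) if y ∈ Q_x and z ▷' y = z ▷ y if y ∉ Q_x. Then (Q, ▷') is again a quandle. -/
open Classical

/-- The orbit of `x`: the smallest subset containing `x` and closed under all
translations `β_y = (· ▷ y)` and their inverses. -/
def orbit {Q : Type*} (op inv : Q → Q → Q) (x : Q) : Set Q :=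
  ⋂₀ {S : Set Q | x ∈ S ∧ ∀ y z, z ∈ S → op z y ∈ S ∧ inv z y ∈ S}

/-- Reversing the orientation of an orbit of a quandle again yields a quandle. -/
theorem stmt0 {Q : Type*} (op inv : Q → Q → Q)
    (hidem : ∀ z, op z z = z)
    (hinv1 : ∀ y z, inv (op z y) y = z)
    (hinv2 : ∀ y z, op (inv z y) y = z)
    (hdist : ∀ a b c, op (op a b) c = op (op a c) (op b c))
    (x : Q)
    (op' : Q → Q → Q)
    (hop' : ∀ z y, op' z y = if y ∈ orbit op inv x then inv z y else op z y) :
    (∀ z, op' z z = z) ∧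
    (∀ y, Function.Bijective fun z => op' z y) ∧
    (∀ a b c, op' (op' a b) c = op' (op' a c) (op' b c)) := by
  have opinj : ∀ y a b, op a y = op b y → a = b := by
    intro y a b h
    have := congrArg (fun t => inv t y) h
    simpa [hinv1] using this
  have hinvidem : ∀ z, inv z z = z := by
    intro z
    have h := hinv1 z z
    rwa [hidem] at h
  have D2 : ∀ a b c, inv (op a b) c = op (inv a c) (inv b c) := by
    intro a b c
    apply opinj c
    rw [hinv2, hdist, hinv2, hinv2]
  have D3 : ∀ a b c, op (inv a b) c = inv (op a c) (op b c) := by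
    intro a b c
    apply opinj (op b c)
    rw [← hdist, hinv2, hinv2]
  have E1 : ∀ a b c, inv (inv a b) c = inv (inv a c) (inv b c) := by
    intro a b c
    apply opinj (inv b c)
    rw [← D2, hinv2, hinv2]
  have horb_op : ∀ c y, y ∈ orbit op inv x → op y c ∈ orbit op inv x := by
    intro c y hy
    exact Set.mem_sInter.2 fun S hS => (hS.2 c y (Set.mem_sInter.1 hy S hS)).1
  have horb_inv : ∀ c y, y ∈ orbit op inv x → inv y c ∈ orbit op inv x := by
    intro c y hy
    exact Set.mem_sInter.2 fun S hS => (hS.2 c y (Set.mem_sInter.1 hy S hS)).2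
  have horb_op_iff : ∀ c y, op y c ∈ orbit op inv x ↔ y ∈ orbit op inv x := by
    intro c y
    constructor
    · intro h
      have := horb_inv c _ h
      rwa [hinv1] at this
    · exact horb_op c y
  have horb_inv_iff : ∀ c y, inv y c ∈ orbit op inv x ↔ y ∈ orbit op inv x := by
    intro c y
    constructor
    · intro h
      have := horb_op c _ h
      rwa [hinv2] at this
    · exact horb_inv c y
  refine ⟨?_, ?_, ?_⟩
  · intro z
    rw [hop']
    split
    · exact hinvidem z
    · exact hidem z
  · intro y
    by_cases h : y ∈ orbit op inv x
    · simp only [hop', if_pos h]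
      exact ⟨fun a b hab => by
        have := congrArg (fun t => op t y) hab
        simpa [hinv2] using this,
        fun a => ⟨op a y, hinv1 y a⟩⟩
    · simp only [hop', if_neg h]
      exact ⟨fun a b hab => opinj y a b hab, fun a => ⟨inv a y, hinv2 y a⟩⟩
  · intro a b c
    by_cases hc : c ∈ orbit op inv x
    · by_cases hb : b ∈ orbit op inv x
      · have hbc : inv b c ∈ orbit op inv x := (horb_inv_iff c b).2 hb
        rw [hop' a b, if_pos hb, hop' _ c, if_pos hc, hop' a c, if_pos hc,
          hop' b c, if_pos hc, hop' _ _, if_pos hbc]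
        exact E1 a b c
      · have hbc : ¬ inv b c ∈ orbit op inv x := fun h => hb ((horb_inv_iff c b).1 h)
        rw [hop' a b, if_neg hb, hop' _ c, if_pos hc, hop' a c, if_pos hc,
          hop' b c, if_pos hc, hop' _ _, if_neg hbc]
        exact D2 a b c
    · by_cases hb : b ∈ orbit op inv x
      · have hbc : op b c ∈ orbit op inv x := (horb_op_iff c b).2 hb
        rw [hop' a b, if_pos hb, hop' _ c, if_neg hc, hop' a c, if_neg hc,
          hop' b c, if_neg hc, hop' _ _, if_pos hbc]
        exact D3 a b c
      · have hbc : ¬ op b c ∈ orbit op inv x := fun h => hb ((horb_op_iff c b).1 h)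
        rw [hop' a b, if_neg hb, hop' _ c, if_neg hc, hop' a c, if_neg hc,
          hop' b c, if_neg hc, hop' _ _, if_neg hbc]
        exact hdist a b c
end

section
/- Let N = ℤ[t, t^{-1}]/(t² + t − 1), let Q₁ and Q₂ be two disjoint copies of N, with x_i denoting the copy of x ∈ N in Q_i, and set m₁ = 0, m₂ = 1 in N. Define on Q = Q₁ ⊔ Q₂ the operation x_i ▷ y_j = (m_j − m_i + t·x + (1 − t)·y)_i. Then (Q, ▷) is a quandle: x ▷ x = x for all x ∈ Q, each right translation β_{y_j} is a bijection of Q, and right self-distributivity holds. -/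
open LaurentPolynomial

noncomputable section

/-- The Laurent polynomial ring ℤ[t,t⁻¹]. -/
abbrev Lring : Type := LaurentPolynomial ℤ

/-- The principal ideal J = (t² + t − 1). -/
def Jideal : Ideal Lring := Ideal.span {T 1 ^ 2 + T 1 - 1}

/-- N = ℤ[t,t⁻¹]/(t² + t − 1). -/
abbrev Nring : Type := Lring ⧸ Jideal

/-- The image of t in N. -/
def tN : Nring := Ideal.Quotient.mk Jideal (T 1)


/-- The quandle carrier: disjoint union of two copies of N, indexed by Fin 2
(index 0 is Q₁, index 1 is Q₂); `(i, x)` is the element `x_i`. -/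
abbrev Qc : Type := Fin 2 × Nring

/-- m₁ = 0, m₂ = 1. -/
def mC : Fin 2 → Nring := ![0, 1]

/-- The quandle operation x_i ▷ y_j = (m_j − m_i + t·x + (1−t)·y)_i. -/
def qop (p q : Qc) : Qc := (p.1, mC q.1 - mC p.1 + tN * p.2 + (1 - tN) * q.2)

/-- The inverse translations: β_{y_j}⁻¹(x_i) = (t⁻¹·(m_i − m_j + x − (1−t)·y))_i. -/
def qinv (p q : Qc) : Qc :=
  (p.1, Ring.inverse tN * (mC p.1 - mC q.1 + p.2 - (1 - tN) * q.2))


lemma tN_rel : tN * tN + tN - 1 = 0 := by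
  have : Ideal.Quotient.mk Jideal (T 1 ^ 2 + T 1 - 1) = 0 := by
    rw [Ideal.Quotient.eq_zero_iff_mem, Jideal]
    exact Ideal.subset_span rfl
  simpa [tN, pow_two] using this

lemma tN_mul : tN * (tN + 1) = 1 := by linear_combination tN_rel

lemma tN_unit : IsUnit tN := IsUnit.of_mul_eq_one _ tN_mul

lemma tN_inv_mul : Ring.inverse tN * tN = 1 := Ring.inverse_mul_cancel _ tN_unit

/-- (Q, ▷) is a quandle: idempotency, bijective right translations,
right self-distributivity. -/
theorem stmt6 :
    (∀ p : Qc, qop p p = p) ∧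
    (∀ q : Qc, Function.Bijective fun p => qop p q) ∧
    (∀ a b c : Qc, qop (qop a b) c = qop (qop a c) (qop b c)) := by
  refine ⟨?_, ?_, ?_⟩
  · intro p
    simp [qop]; ring
  · intro q
    refine Function.bijective_iff_has_inverse.2 ⟨fun p => qinv p q, ?_, ?_⟩
    · intro p
      simp only [qop, qinv]
      refine Prod.ext rfl ?_
      simp only
      linear_combination p.2 * tN_inv_mul
    · intro p
      simp only [qop, qinv]
      refine Prod.ext rfl ?_
      simp only
      linear_combination (mC p.1 - mC q.1 + p.2 - (1 - tN) * q.2) * tN_inv_mul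
  · intro a b c
    simp only [qop]
    refine Prod.ext rfl ?_
    simp only
    ring
end
end

section
/- With Q = Q₁ ⊔ Q₂ and x_i ▷ y_j = (m_j − m_i + t·x + (1 − t)·y)_i as above (where N = ℤ[t, t^{-1}]/(t² + t − 1), m₁ = 0, m₂ = 1), the quandle Q is medial: (w ▷ x) ▷ (y ▷ z) = (w ▷ y) ▷ (x ▷ z) for all w, x, y, z ∈ Q. -/
open LaurentPolynomial

noncomputable section

/-- The quandle Q is medial. -/
theorem stmt7 :
    ∀ w x y z : Qc, qop (qop w x) (qop y z) = qop (qop w y) (qop x z) := by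
  intro w x y z
  simp only [qop, Prod.mk.injEq]
  exact ⟨trivial, by ring⟩
end
end

section
/- In the quandle Q = Q₁ ⊔ Q₂ over N = ℤ[t, t^{-1}]/(t² + t − 1) with operation x_i ▷ y_j = (m_j − m_i + t·x + (1 − t)·y)_i, the orbits of Q are exactly Q₁ and Q₂: for any x, y ∈ N, x₁ and y₁ lie in the same orbit, x₂ and y₂ lie in the same orbit, and no element of Q₁ lies in the same orbit as an element of Q₂. -/
open LaurentPolynomial

noncomputable section

set_option synthInstance.maxHeartbeats 400000 in
lemma key : (1 - tN) * (1 + tN) ^ 2 = 1 := by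
  have : (Ideal.Quotient.mk Jideal) ((1 - T 1) * (1 + T 1) ^ 2) =
      (Ideal.Quotient.mk Jideal) 1 := by
    rw [Ideal.Quotient.eq]
    rw [Jideal, Ideal.mem_span_singleton]
    exact ⟨-(T 1 : Lring), by ring⟩
  simpa [tN, map_mul, map_sub, map_add, map_pow, map_one] using this

lemma orbit_fst (i : Fin 2) (x : Nring) (p : Qc) :
    p ∈ orbit qop qinv (i, x) → p.1 = i := fun hp =>
  hp {q : Qc | q.1 = i} ⟨rfl, fun _ _ hz => ⟨hz, hz⟩⟩

lemma orbit_mem (i : Fin 2) (x y : Nring) : (i, y) ∈ orbit qop qinv (i, x) := by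
  intro S hS
  obtain ⟨hx, hcl⟩ := hS
  have := (hcl (i, (1 + tN) ^ 2 * (y - tN * x)) (i, x) hx).1
  have heq : qop (i, x) (i, (1 + tN) ^ 2 * (y - tN * x)) = (i, y) := by
    unfold qop
    refine Prod.ext rfl ?_
    show mC i - mC i + tN * x + (1 - tN) * ((1 + tN) ^ 2 * (y - tN * x)) = y
    have h := key
    ring_nf
    ring_nf at h
    linear_combination (y - tN * x) * h
  rwa [heq] at this

/-- The orbits of Q are exactly Q₁ and Q₂. -/
theorem stmt10 :
    ∀ x y : Nring,
      ((0 : Fin 2), y) ∈ orbit qop qinv ((0 : Fin 2), x) ∧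
      ((1 : Fin 2), y) ∈ orbit qop qinv ((1 : Fin 2), x) ∧
      ((1 : Fin 2), y) ∉ orbit qop qinv ((0 : Fin 2), x) ∧
      ((0 : Fin 2), y) ∉ orbit qop qinv ((1 : Fin 2), x) := by
  intro x y
  refine ⟨orbit_mem 0 x y, orbit_mem 1 x y, fun h => ?_, fun h => ?_⟩
  · have := orbit_fst 0 x _ h
    simp at this
  · have := orbit_fst 1 x _ h
    simp at this
end
end

section
/- Let Q^rev be the orientation-reversal (on orbit Q₂) of the medial quandle Q over N = ℤ[t, t^{-1}]/(t² + t − 1) as above, and let ~ be the smallest quandle congruence on Q^rev such that the quotient is medial (i.e., (w ▷' x) ▷' (y ▷' z) ~ (w ▷' y) ▷' (x ▷' z) for all w, x, y, z, and ~ is compatible with ▷' and its inverse). Then for every a ∈ N, a₁ ~ (a + t²)₁. -/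
open LaurentPolynomial

noncomputable section

/-- The orientation-reversal of Q on the orbit Q₂: ▷' agrees with ▷ when the
right operand lies in Q₁, and equals β⁻¹ when the right operand lies in Q₂. -/
def rop (p q : Qc) : Qc := if q.1 = 1 then qinv p q else qop p q

/-- The inverse translations of the reversed quandle. -/
def rinv (p q : Qc) : Qc := if q.1 = 1 then qop p q else qinv p q

/-- The smallest quandle congruence on Q^rev whose quotient is medial:
the equivalence relation compatible with ▷' and its inverse, generated by
the medial law (w ▷' x) ▷' (y ▷' z) ~ (w ▷' y) ▷' (x ▷' z). -/
inductive medRel : Qc → Qc → Prop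
  | refl (a : Qc) : medRel a a
  | symm {a b : Qc} : medRel a b → medRel b a
  | trans {a b c : Qc} : medRel a b → medRel b c → medRel a c
  | compat_op {a b c d : Qc} : medRel a b → medRel c d → medRel (rop a c) (rop b d)
  | compat_inv {a b c d : Qc} : medRel a b → medRel c d → medRel (rinv a c) (rinv b d)
  | medial (w x y z : Qc) :
      medRel (rop (rop w x) (rop y z)) (rop (rop w y) (rop x z))


lemma tN_sq : tN ^ 2 = 1 - tN := by
  have h : (Ideal.Quotient.mk Jideal) (T 1 ^ 2 + T 1 - 1) = 0 :=
    Ideal.Quotient.eq_zero_iff_mem.mpr (Ideal.subset_span rfl)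
  have h2 : tN ^ 2 + tN - 1 = 0 := by
    show (Ideal.Quotient.mk Jideal) (T 1) ^ 2 + (Ideal.Quotient.mk Jideal) (T 1) - 1 = 0
    rw [← map_pow, ← map_one (Ideal.Quotient.mk Jideal), ← map_add, ← map_sub]
    simpa using h
  linear_combination h2

lemma tN_inv : Ring.inverse tN = tN + 1 := by
  have hu : tN * (tN + 1) = 1 := tN_mul
  have := Ring.inverse_unit (Units.mkOfMulEqOne tN (tN + 1) hu)
  exact this

/-- In the medial congruence on Q^rev, a₁ ~ (a + t²)₁ for every a ∈ N. -/
theorem stmt12 : ∀ a : Nring, medRel ((0 : Fin 2), a) ((0 : Fin 2), a + tN ^ 2) := by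
  intro a
  have h := medRel.medial ((0 : Fin 2), a + 2 * tN) ((1 : Fin 2), 0) ((0 : Fin 2), 0)
      ((0 : Fin 2), 1)
  simp only [rop, qop, qinv, mC] at h
  norm_num [tN_inv] at h
  have e1 : tN * ((tN + 1) * (-1 + (a + 2 * tN))) + (1 - tN) * (1 - tN) = a + tN ^ 2 := by
    linear_combination (2 * tN + a - 1) * tN_sq
  have e2 : (tN + 1) * (-1 + tN * (a + 2 * tN) - (1 - tN) * (-1 + (1 - tN))) = a := by
    linear_combination (tN + a + 1) * tN_sq
  rw [e1, e2] at h
  exact h.symm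
end
end
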